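/- No purely imaginary zeroes in the lower half-plane (Lemma 3.5): for every γ > 0, every ℓ ≥ 0 and every t > 0, one has F(−it, ℓ, γ) ≠ 0. Equivalently, the PT-symmetric waveguide has no negative real eigenvalues λ = k² with purely imaginary k in the lower half-plane. -/

import Mathlib

open Complex

/-- The entire function `c(z) = Σ (-1)^n z^n/(2n)!`, so that `c(w^2) = cos w`. -/
noncomputable def cEnt (z : ℂ) : ℂ := ∑' n : ℕ, (-1)^n * z^n / ((2*n).factorial : ℂ)

/-- The entire function `s(z) = Σ (-1)^n z^n/(2n+1)!`, so that `w * s(w^2) = sin w`. -/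
noncomputable def sEnt (z : ℂ) : ℂ := ∑' n : ℕ, (-1)^n * z^n / ((2*n+1).factorial : ℂ)

noncomputable def Fminus (k : ℂ) (γ : ℝ) : ℂ :=
  2*I*k * cEnt (k^2 - I*γ) - (2*k^2 - I*γ) * sEnt (k^2 - I*γ)

noncomputable def Fplus (k : ℂ) (γ : ℝ) : ℂ :=
  2*I*k * cEnt (k^2 + I*γ) - (2*k^2 + I*γ) * sEnt (k^2 + I*γ)

noncomputable def Fzero (k : ℂ) (γ : ℝ) : ℂ :=
  (γ:ℂ)^2 * sEnt (k^2 - I*γ) * sEnt (k^2 + I*γ)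

/-- The characteristic function `F(k,ℓ,γ)` of the PT-symmetric waveguide. -/
noncomputable def FF (k : ℂ) (ℓ γ : ℝ) : ℂ :=
  Fminus k γ * Fplus k γ - Complex.exp (-4*I*k*ℓ) * Fzero k γ

open ComplexConjugate

/-!
Put `k = -I * t` and let `w` be a square root of `k ^ 2 - I * γ`; then `conj w` is a square
root of `k ^ 2 + I * γ`. Multiplying by `w * conj w` turns `F` into
`G w * G (conj w) - exp (-4 * t * ℓ) * γ ^ 2 * sin w * sin (conj w)` with
`G w = 2 * t * w * cos w + (t ^ 2 - w ^ 2) * sin w`. Because `w ^ 2 + conj w ^ 2 = -2 * t ^ 2`,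
`G w * G (conj w) - γ ^ 2 * sin w * sin (conj w)` collapses to
`t / 2 * (ψ (2 * re w) - ψ (2 * I * im w))` with `ψ x = 2 * t * x ^ 2 * cos x - x ^ 3 * sin x`.
On the two axes `ψ` is bounded using `|sin x| ≤ |x|`, `1 ≤ cosh x` and `x ^ 2 ≤ x * sinh x`,
which makes this at least `4 * t ^ 4 + 8 * t ^ 3 * normSq w > 0`, while the remaining term
`(1 - exp (-4 * t * ℓ)) * γ ^ 2 * normSq (sin w)` is nonnegative.
-/
lemma cEnt_sq (w : ℂ) : cEnt (w ^ 2) = cos w := by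
  rw [cos_eq_tsum, cEnt]
  simp only [pow_mul]

lemma mul_sEnt_sq (w : ℂ) : w * sEnt (w ^ 2) = sin w := by
  rw [sin_eq_tsum, sEnt, ← tsum_mul_left]
  congr 1 with n
  ring

/-- Both `Fminus k γ` and `Fplus k γ`, multiplied by a square root `w` of `k ^ 2 ∓ I * γ`. -/
noncomputable def Fsqrt (k w : ℂ) : ℂ := 2 * I * k * w * cos w - (k ^ 2 + w ^ 2) * sin w

section SquareRoots

variable {k w z : ℂ} {γ : ℝ}

lemma mul_Fminus_eq_Fsqrt (hw : w ^ 2 = k ^ 2 - I * γ) : w * Fminus k γ = Fsqrt k w := by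
  rw [Fminus, Fsqrt, ← hw, cEnt_sq, ← mul_sEnt_sq w]
  linear_combination (sEnt (w ^ 2) * w) * hw

lemma mul_Fplus_eq_Fsqrt (hz : z ^ 2 = k ^ 2 + I * γ) : z * Fplus k γ = Fsqrt k z := by
  rw [Fplus, Fsqrt, ← hz, cEnt_sq, ← mul_sEnt_sq z]
  linear_combination (sEnt (z ^ 2) * z) * hz

lemma mul_mul_FF (ℓ : ℝ) (hw : w ^ 2 = k ^ 2 - I * γ) (hz : z ^ 2 = k ^ 2 + I * γ) :
    w * z * FF k ℓ γ
      = Fsqrt k w * Fsqrt k z - exp (-4 * I * k * ℓ) * γ ^ 2 * (sin w * sin z) := by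
  rw [← mul_Fminus_eq_Fsqrt hw, ← mul_Fplus_eq_Fsqrt hz, ← mul_sEnt_sq w, ← mul_sEnt_sq z,
    FF, Fzero, ← hw, ← hz]
  ring

end SquareRoots

lemma Fsqrt_neg_I_mul (t w : ℂ) :
    Fsqrt (-I * t) w = 2 * t * w * cos w + (t ^ 2 - w ^ 2) * sin w := by
  rw [Fsqrt]
  linear_combination (-2 * t * w * cos w - t ^ 2 * sin w) * I_sq

noncomputable def psi (t x : ℂ) : ℂ := 2 * t * x ^ 2 * cos x - x ^ 3 * sin x

lemma Fsqrt_mul_Fsqrt_eq_psi_sub_psi {t w z : ℂ} (h : w ^ 2 + z ^ 2 = -2 * t ^ 2) :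
    Fsqrt (-I * t) w * Fsqrt (-I * t) z + ((w ^ 2 - z ^ 2) / 2) ^ 2 * (sin w * sin z)
      = t / 2 * (psi t (w + z) - psi t (w - z)) := by
  simp only [Fsqrt_neg_I_mul, psi, cos_add, sin_add, cos_sub, sin_sub]
  linear_combination (t * z * sin w * cos z + t * w * cos w * sin z
    + (w ^ 2 + z ^ 2 + 2 * t ^ 2) / 4 * sin w * sin z) * h

lemma psi_ofReal (t x : ℝ) :
    psi t x = ((2 * t * x ^ 2 * Real.cos x - x ^ 3 * Real.sin x : ℝ) : ℂ) := by
  simp only [psi]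
  push_cast
  ring

lemma psi_ofReal_mul_I (t y : ℝ) :
    psi t (y * I) = -((2 * t * y ^ 2 * Real.cosh y + y ^ 3 * Real.sinh y : ℝ) : ℂ) := by
  simp only [psi, cos_mul_I, sin_mul_I]
  push_cast
  linear_combination (2 * t * y ^ 2 * cosh y + y ^ 3 * sinh y * (1 - I ^ 2)) * I_sq

lemma neg_add_le_mul_sq_mul_cos_sub_pow_mul_sin {t : ℝ} (ht : 0 ≤ t) (x : ℝ) :
    -(2 * t * x ^ 2 + x ^ 4) ≤ 2 * t * x ^ 2 * Real.cos x - x ^ 3 * Real.sin x := by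
  have hcos : -1 ≤ Real.cos x := Real.neg_one_le_cos x
  have hsin : x * Real.sin x ≤ x ^ 2 := by
    calc x * Real.sin x ≤ |x| * |Real.sin x| := by rw [← abs_mul]; exact le_abs_self _
      _ ≤ |x| * |x| := mul_le_mul_of_nonneg_left Real.abs_sin_le_abs (abs_nonneg x)
      _ = x ^ 2 := by rw [← abs_mul, ← sq, abs_sq]
  nlinarith [mul_le_mul_of_nonneg_left hcos (by positivity : 0 ≤ 2 * t * x ^ 2),
    mul_le_mul_of_nonneg_left hsin (sq_nonneg x)]

lemma add_le_mul_sq_mul_cosh_add_pow_mul_sinh {t : ℝ} (ht : 0 ≤ t) (x : ℝ) :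
    2 * t * x ^ 2 + x ^ 4 ≤ 2 * t * x ^ 2 * Real.cosh x + x ^ 3 * Real.sinh x := by
  have hsinh : x ^ 2 ≤ x * Real.sinh x := by
    rcases le_total 0 x with hx | hx
    · nlinarith [Real.self_le_sinh_iff.mpr hx]
    · nlinarith [Real.sinh_le_self_iff.mpr hx]
  nlinarith [mul_le_mul_of_nonneg_left (Real.one_le_cosh x) (by positivity : 0 ≤ 2 * t * x ^ 2),
    mul_le_mul_of_nonneg_left hsinh (sq_nonneg x)]

lemma re_psi_sub_psi_pos {t a b : ℝ} (ht : 0 < t) (hab : a ^ 2 - b ^ 2 = -t ^ 2) :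
    0 < (t / 2 * (psi t ↑(2 * a) - psi t (↑(2 * b) * I))).re := by
  rw [psi_ofReal, psi_ofReal_mul_I, sub_neg_eq_add, ← ofReal_add, ← ofReal_ofNat,
    ← ofReal_div, ← ofReal_mul, ofReal_re]
  have hcos := neg_add_le_mul_sq_mul_cos_sub_pow_mul_sin ht.le (2 * a)
  have hcosh := add_le_mul_sq_mul_cosh_add_pow_mul_sinh ht.le (2 * b)
  have hlower : -(2 * t * (2 * a) ^ 2 + (2 * a) ^ 4) + (2 * t * (2 * b) ^ 2 + (2 * b) ^ 4)
      = 8 * t ^ 3 + 16 * t ^ 2 * (a ^ 2 + b ^ 2) := by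
    linear_combination (-8 * t - 16 * (a ^ 2 + b ^ 2)) * hab
  have : 0 < 8 * t ^ 3 + 16 * t ^ 2 * (a ^ 2 + b ^ 2) := by positivity
  exact mul_pos (half_pos ht) (by linarith)

lemma mul_conj_mul_FF_neg_I_mul (ℓ : ℝ) {γ t : ℝ} {w : ℂ}
    (hw : w ^ 2 = (-I * t) ^ 2 - I * γ) :
    w * conj w * FF (-I * t) ℓ γ = t / 2 * (psi t ↑(2 * w.re) - psi t (↑(2 * w.im) * I))
      + ((1 - Real.exp (-(4 * t * ℓ))) * γ ^ 2 * normSq (sin w) : ℝ) := by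
  have hz : conj w ^ 2 = (-I * t) ^ 2 + I * γ := by
    rw [← map_pow, hw]
    simp only [map_sub, map_mul, map_pow, map_neg, conj_I, conj_ofReal]
    ring
  have hsum : w ^ 2 + conj w ^ 2 = -2 * t ^ 2 := by
    rw [hw, hz]
    linear_combination 2 * (t : ℂ) ^ 2 * I_sq
  have hdiff : ((w ^ 2 - conj w ^ 2) / 2) ^ 2 = -γ ^ 2 := by
    rw [hw, hz]
    linear_combination (γ : ℂ) ^ 2 * I_sq
  have hexp : exp (-4 * I * (-I * t) * ℓ) = Real.exp (-(4 * t * ℓ)) := by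
    rw [ofReal_exp]
    push_cast
    congr 1
    linear_combination (4 * (t : ℂ) * ℓ) * I_sq
  rw [mul_mul_FF ℓ hw hz, ← add_conj, ← sub_conj, ← Fsqrt_mul_Fsqrt_eq_psi_sub_psi hsum,
    hdiff, hexp, sin_conj, mul_conj]
  push_cast
  ring

theorem stmt_14_general (γ ℓ t : ℝ) (hℓ : 0 ≤ ℓ) (ht : 0 < t) :
    FF (-I * t) ℓ γ ≠ 0 := by
  obtain ⟨w, hw⟩ := IsAlgClosed.exists_pow_nat_eq ((-I * t) ^ 2 - I * γ) two_pos
  have hre : w.re ^ 2 - w.im ^ 2 = -t ^ 2 := by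
    simpa [sq] using congrArg re hw
  have hdamping : 0 ≤ (1 - Real.exp (-(4 * t * ℓ))) * γ ^ 2 * normSq (sin w) := by
    have : Real.exp (-(4 * t * ℓ)) ≤ 1 := Real.exp_le_one_iff.mpr (by nlinarith)
    have := normSq_nonneg (sin w)
    positivity
  intro hF
  have key := congrArg re (mul_conj_mul_FF_neg_I_mul ℓ hw)
  rw [hF, mul_zero, zero_re, add_re, ofReal_re] at key
  linarith [re_psi_sub_psi_pos ht hre]

theorem stmt_14 (γ ℓ t : ℝ) (hγ : 0 < γ) (hℓ : 0 ≤ ℓ) (ht : 0 < t) :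
    FF (-I * t) ℓ γ ≠ 0 :=
  stmt_14_general γ ℓ t hℓ ht
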